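/- arXiv:2101.01170 — 7 statements merged into one kernel-verified Lean document; each statement's English description precedes it below -/
import Mathlib

section
/- For an agent facing a kinked budget with slopes 1-t₀ for Y ≤ K and 1-t₁ for Y > K where 0 ≤ t₀ < t₁ < 1, and iso-elastic quasi-linear utility with elasticity ε > 0, the optimal income equals N*(1-t₀)^ε if N* < K(1-t₀)^{-ε}, equals K if K(1-t₀)^{-ε} ≤ N* ≤ K(1-t₁)^{-ε}, and equals N*(1-t₁)^ε if N* > K(1-t₁)^{-ε}. -/
/-- Solution of the kinked-budget problem. With slopes `1-t₀` for
`Y ≤ K` and `1-t₁` for `Y > K`, `0 ≤ t₀ < t₁ < 1`, and iso-elastic quasi-linear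
utility with elasticity `ε > 0`, the optimal income equals `N(1-t₀)^ε` if
`N < K(1-t₀)^{-ε}`, equals `K` if `K(1-t₀)^{-ε} ≤ N ≤ K(1-t₁)^{-ε}`, and equals
`N(1-t₁)^ε` if `N > K(1-t₁)^{-ε}` (it is the unique maximizer over `Y > 0`). -/
theorem kink_solution
    (ε K t0 t1 I0 : ℝ) (hε : 0 < ε) (hK : 0 < K)
    (ht0 : 0 ≤ t0) (h01 : t0 < t1) (ht1 : t1 < 1)
    (N : ℝ) (hN : 0 < N) :
    let C : ℝ → ℝ := fun Y =>
      if Y ≤ K then I0 + (1 - t0) * Y else I0 + K * (1 - t0) + (1 - t1) * (Y - K)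
    let U : ℝ → ℝ := fun Y => C Y - (N / (1 + 1 / ε)) * (Y / N) ^ (1 + 1 / ε)
    let Yopt : ℝ :=
      if N < K * (1 - t0) ^ (-ε) then N * (1 - t0) ^ ε
      else if N ≤ K * (1 - t1) ^ (-ε) then K
      else N * (1 - t1) ^ ε
    ∀ Y : ℝ, 0 < Y → Y ≠ Yopt → U Y < U Yopt := by
  intro C U Yopt Y hY hne
  have hε' : (0:ℝ) < 1/ε := by positivity
  have hp1 : (1:ℝ) < 1 + 1/ε := by linarith
  have hp0 : (0:ℝ) < 1 + 1/ε := by linarith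
  have ht0' : (0:ℝ) < 1 - t0 := by linarith
  have ht1' : (0:ℝ) < 1 - t1 := by linarith
  have hN' : N ≠ 0 := ne_of_gt hN
  have hCdef : ∀ Z : ℝ, C Z =
      if Z ≤ K then I0 + (1 - t0) * Z else I0 + K * (1 - t0) + (1 - t1) * (Z - K) :=
    fun _ => rfl
  have hUdef : ∀ Z : ℝ, U Z = C Z - (N / (1 + 1 / ε)) * (Z / N) ^ (1 + 1 / ε) :=
    fun _ => rfl
  have hYoptdef : Yopt =
      if N < K * (1 - t0) ^ (-ε) then N * (1 - t0) ^ ε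
      else if N ≤ K * (1 - t1) ^ (-ε) then K
      else N * (1 - t1) ^ ε := rfl
  -- upper bounds on C by each line
  have hCub0 : ∀ Z : ℝ, C Z ≤ I0 + (1 - t0) * Z := by
    intro Z; rw [hCdef]; split_ifs with h
    · exact le_rfl
    · push_neg at h; nlinarith
  have hCub1 : ∀ Z : ℝ, C Z ≤ I0 + K * (1 - t0) + (1 - t1) * (Z - K) := by
    intro Z; rw [hCdef]; split_ifs with h
    · nlinarith
    · exact le_rfl
  -- key strict convexity inequality
  have key : ∀ Y0 : ℝ, 0 < Y0 → Y ≠ Y0 →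
      (Y0/N) ^ (1/ε) * (Y - Y0) + (N/(1+1/ε)) * (Y0/N)^(1+1/ε)
        < (N/(1+1/ε)) * (Y/N)^(1+1/ε) := by
    intro Y0 hY0 hne0
    have hY0' : Y0 ≠ 0 := ne_of_gt hY0
    have hq : (0:ℝ) < Y0 / N := by positivity
    have hx : (-1:ℝ) ≤ Y/Y0 - 1 := by
      have : 0 < Y / Y0 := by positivity
      linarith
    have hx0 : Y/Y0 - 1 ≠ 0 := by
      intro h
      apply hne0
      have : Y / Y0 = 1 := by linarith
      exact (div_eq_one_iff_eq hY0').mp this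
    have hber := one_add_mul_self_lt_rpow_one_add hx hx0 hp1
    have hc : (0:ℝ) < (N/(1+1/ε)) * (Y0/N)^(1+1/ε) := by positivity
    have h2 := mul_lt_mul_of_pos_left hber hc
    have e1 : (1 + (Y/Y0 - 1)) = Y/Y0 := by ring
    rw [e1] at h2
    have hmul : (Y/N) ^ ((1:ℝ)+1/ε) = (Y0/N)^((1:ℝ)+1/ε) * (Y/Y0)^((1:ℝ)+1/ε) := by
      rw [← Real.mul_rpow (le_of_lt hq) (by positivity)]
      congr 1
      field_simp
    have hsplit : (Y0/N)^((1:ℝ)+1/ε) = (Y0/N) * (Y0/N)^((1:ℝ)/ε) := by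
      rw [Real.rpow_add hq, Real.rpow_one]
    have e2 : (N/(1+1/ε)) * (Y0/N)^((1:ℝ)+1/ε) * ((Y/Y0)^((1:ℝ)+1/ε))
        = (N/(1+1/ε)) * (Y/N)^((1:ℝ)+1/ε) := by rw [hmul]; ring
    have e3 : (N/(1+1/ε)) * (Y0/N)^((1:ℝ)+1/ε) * (1 + (1+1/ε)*(Y/Y0-1))
        = (Y0/N) ^ ((1:ℝ)/ε) * (Y - Y0) + (N/(1+1/ε)) * (Y0/N)^((1:ℝ)+1/ε) := by
      rw [hsplit]
      field_simp
      ring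
    calc (Y0/N) ^ (1/ε) * (Y - Y0) + (N/(1+1/ε)) * (Y0/N)^(1+1/ε)
        = (N/(1+1/ε)) * (Y0/N)^((1:ℝ)+1/ε) * (1 + (1+1/ε)*(Y/Y0-1)) := by rw [e3]
      _ < (N/(1+1/ε)) * (Y0/N)^((1:ℝ)+1/ε) * ((Y/Y0)^((1:ℝ)+1/ε)) := h2
      _ = (N/(1+1/ε)) * (Y/N)^((1:ℝ)+1/ε) := e2
  -- helper for the slope at interior optima
  have hs_gen : ∀ t : ℝ, 0 < 1 - t → ((N*(1-t)^ε)/N) ^ ((1:ℝ)/ε) = 1 - t := by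
    intro t ht
    rw [mul_comm, mul_div_assoc, div_self hN', mul_one]
    rw [← Real.rpow_mul (le_of_lt ht)]
    rw [mul_one_div_cancel (ne_of_gt hε), Real.rpow_one]
  -- reduce goal to a bound on C
  suffices hCle : C Y - C Yopt ≤ (Yopt/N) ^ ((1:ℝ)/ε) * (Y - Yopt) ∧ 0 < Yopt by
    obtain ⟨hCle, hYopt_pos⟩ := hCle
    rw [hUdef, hUdef]
    have := key Yopt hYopt_pos hne
    linarith
  rw [hYoptdef]
  by_cases h1 : N < K * (1 - t0) ^ (-ε)
  · -- interior solution on first segment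
    rw [if_pos h1]
    have hprod : (1-t0)^(-ε) * (1-t0)^ε = 1 := by
      rw [← Real.rpow_add ht0']; simp
    have hpos : (0:ℝ) < N * (1-t0)^ε := by positivity
    have hltK : N * (1-t0)^ε < K := by
      have h2 : N * (1-t0)^ε < K * (1-t0)^(-ε) * (1-t0)^ε :=
        mul_lt_mul_of_pos_right h1 (by positivity)
      calc N * (1-t0)^ε < K * (1-t0)^(-ε) * (1-t0)^ε := h2
        _ = K * ((1-t0)^(-ε) * (1-t0)^ε) := by ring
        _ = K := by rw [hprod, mul_one]
    have hCopt : C (N * (1-t0)^ε) = I0 + (1-t0) * (N * (1-t0)^ε) := by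
      rw [hCdef, if_pos (le_of_lt hltK)]
    refine ⟨?_, hpos⟩
    rw [hs_gen t0 ht0', hCopt]
    have := hCub0 Y
    linarith
  · rw [if_neg h1]
    push_neg at h1
    by_cases h2 : N ≤ K * (1 - t1) ^ (-ε)
    · -- bunching at the kink
      rw [if_pos h2]
      refine ⟨?_, hK⟩
      have hCK : C K = I0 + (1-t0) * K := by rw [hCdef, if_pos le_rfl]
      have hs0 : (K/N) ^ ((1:ℝ)/ε) ≤ 1 - t0 := by
        have hprod : (1-t0)^(-ε) * (1-t0)^ε = 1 := by
          rw [← Real.rpow_add ht0']; simp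
        have hKle : K / N ≤ (1-t0)^ε := by
          rw [div_le_iff₀ hN]
          calc K = K * ((1-t0)^(-ε) * (1-t0)^ε) := by rw [hprod, mul_one]
            _ = K * (1-t0)^(-ε) * (1-t0)^ε := by ring
            _ ≤ N * (1-t0)^ε := mul_le_mul_of_nonneg_right h1 (by positivity)
            _ = (1-t0)^ε * N := by ring
        calc (K/N) ^ ((1:ℝ)/ε) ≤ ((1-t0)^ε) ^ ((1:ℝ)/ε) :=
              Real.rpow_le_rpow (by positivity) hKle (le_of_lt hε')
          _ = 1 - t0 := by
              rw [← Real.rpow_mul (le_of_lt ht0'), mul_one_div_cancel (ne_of_gt hε),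
                Real.rpow_one]
      have hs1 : 1 - t1 ≤ (K/N) ^ ((1:ℝ)/ε) := by
        have hprod : (1-t1)^(-ε) * (1-t1)^ε = 1 := by
          rw [← Real.rpow_add ht1']; simp
        have hKge : (1-t1)^ε ≤ K / N := by
          rw [le_div_iff₀ hN]
          calc (1-t1)^ε * N ≤ (1-t1)^ε * (K * (1-t1)^(-ε)) :=
                mul_le_mul_of_nonneg_left h2 (by positivity)
            _ = K * ((1-t1)^(-ε) * (1-t1)^ε) := by ring
            _ = K := by rw [hprod, mul_one]
        calc 1 - t1 = ((1-t1)^ε) ^ ((1:ℝ)/ε) := by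
              rw [← Real.rpow_mul (le_of_lt ht1'), mul_one_div_cancel (ne_of_gt hε),
                Real.rpow_one]
          _ ≤ (K/N) ^ ((1:ℝ)/ε) :=
              Real.rpow_le_rpow (by positivity) hKge (le_of_lt hε')
      by_cases hYK : Y ≤ K
      · have hCY : C Y = I0 + (1-t0) * Y := by rw [hCdef, if_pos hYK]
        rw [hCY, hCK]
        nlinarith
      · push_neg at hYK
        have hCY : C Y = I0 + K * (1-t0) + (1-t1) * (Y - K) := by
          rw [hCdef, if_neg (not_le.mpr hYK)]
        rw [hCY, hCK]
        nlinarith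
    · -- interior solution on second segment
      rw [if_neg h2]
      push_neg at h2
      have hprod : (1-t1)^(-ε) * (1-t1)^ε = 1 := by
        rw [← Real.rpow_add ht1']; simp
      have hpos : (0:ℝ) < N * (1-t1)^ε := by positivity
      have hgtK : K < N * (1-t1)^ε := by
        calc K = K * ((1-t1)^(-ε) * (1-t1)^ε) := by rw [hprod, mul_one]
          _ = K * (1-t1)^(-ε) * (1-t1)^ε := by ring
          _ < N * (1-t1)^ε := mul_lt_mul_of_pos_right h2 (by positivity)
      have hCopt : C (N * (1-t1)^ε) = I0 + K * (1-t0) + (1-t1) * (N * (1-t1)^ε - K) := by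
        rw [hCdef, if_neg (not_le.mpr hgtK)]
      refine ⟨?_, hpos⟩
      rw [hs_gen t1 ht1', hCopt]
      have := hCub1 Y
      linarith
end

section
/- In the kink model with s₀ > s₁, for any two distinct elasticities 0 < ε < ε' and any continuous PDF f of n* consistent with elasticity ε and an observed income distribution F_y, there exists another continuous PDF g of n* such that the pair (g, ε') generates the same observed income distribution F_y. Consequently the elasticity is not point-identified from the distribution of y when the class of ability distributions contains all continuous PDFs. -/
open MeasureTheory Set

lemma shift_Iic (f : ℝ → ℝ) (δ t : ℝ) :
    ∫ x in Iic t, f (x + δ) = ∫ x in Iic (t + δ), f x := by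
  have h := (measurePreserving_add_right volume δ).setIntegral_preimage_emb
    (MeasurableEquiv.addRight δ).measurableEmbedding f (Iic (t + δ))
  rw [← h]; congr 1; ext x; simp

lemma shift_Ioi (f : ℝ → ℝ) (δ t : ℝ) :
    ∫ x in Ioi t, f (x + δ) = ∫ x in Ioi (t + δ), f x := by
  have h := (measurePreserving_add_right volume δ).setIntegral_preimage_emb
    (MeasurableEquiv.addRight δ).measurableEmbedding f (Ioi (t + δ))
  rw [← h]; congr 1; ext x; simp

lemma key (f : ℝ → ℝ) (hfc : Continuous f) (hf0 : ∀ x, 0 ≤ f x) (hfi : Integrable f)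
    (φ τ : ℝ → ℝ) (hφc : Continuous φ) (hφ0 : ∀ x, 0 ≤ φ x)
    (hτ : ∀ t, HasDerivAt τ (φ t) t)
    (a b δ0 δ1 : ℝ) (hab : a ≤ b)
    (hτ0 : ∀ t ≤ a, τ t = t + δ0) (hτ1 : ∀ t, b ≤ t → τ t = t + δ1)
    (hφa : ∀ t ≤ a, φ t = 1) (hφb : ∀ t, b ≤ t → φ t = 1) :
    Continuous (fun t => φ t * f (τ t)) ∧ (∀ x, 0 ≤ φ x * f (τ x)) ∧
    Integrable (fun t => φ t * f (τ t)) ∧ ((∫ x, φ x * f (τ x)) = ∫ x, f x) ∧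
    ∀ t, (∫ x in Iic t, φ x * f (τ x)) = ∫ x in Iic (τ t), f x := by
  have hτc : Continuous τ := continuous_iff_continuousAt.2 fun t => (hτ t).continuousAt
  set g : ℝ → ℝ := fun t => φ t * f (τ t) with hg
  have hgc : Continuous g := hφc.mul (hfc.comp hτc)
  have hg0 : ∀ x, 0 ≤ g x := fun x => mul_nonneg (hφ0 x) (hf0 _)
  -- pointwise identifications
  have heqa : EqOn (fun x => f (x + δ0)) g (Iic a) := by
    intro x hx
    simp only [g, hφa x hx, hτ0 x hx, one_mul]
  have heqb : EqOn (fun x => f (x + δ1)) g (Ici b) := by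
    intro x hx
    simp only [g, hφb x hx, hτ1 x hx, one_mul]
  -- integrability
  have hIic : IntegrableOn g (Iic a) :=
    ((hfi.comp_add_right δ0).integrableOn).congr_fun heqa measurableSet_Iic
  have hIcc : IntegrableOn g (Icc a b) := hgc.integrableOn_Icc
  have hIci : IntegrableOn g (Ici b) :=
    ((hfi.comp_add_right δ1).integrableOn).congr_fun heqb measurableSet_Ici
  have hgi : Integrable g := by
    rw [← integrableOn_univ]
    refine ((hIic.union hIcc).union hIci).mono_set ?_
    intro x _
    rcases le_total x a with h | h
    · exact Or.inl (Or.inl h)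
    rcases le_total x b with h' | h'
    · exact Or.inl (Or.inr ⟨h, h'⟩)
    · exact Or.inr h'
  -- main CDF identity
  have hmain : ∀ t, (∫ x in Iic t, g x) = ∫ x in Iic (τ t), f x := by
    have hcase1 : ∀ t ≤ a, (∫ x in Iic t, g x) = ∫ x in Iic (τ t), f x := by
      intro t ht
      rw [← setIntegral_congr_fun measurableSet_Iic (heqa.mono (Iic_subset_Iic.2 ht)),
        shift_Iic, hτ0 t ht]
    intro t
    rcases le_total t a with ht | ht
    · exact hcase1 t ht
    · have hsplit : (∫ x in Iic t, g x) = (∫ x in Iic a, g x) + ∫ x in Ioc a t, g x := by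
        rw [← setIntegral_union (Iic_disjoint_Ioc le_rfl) measurableSet_Ioc
          hgi.integrableOn hgi.integrableOn, Iic_union_Ioc_eq_Iic ht]
      have hcov : (∫ x in a..t, φ x * f (τ x)) = ∫ u in τ a..τ t, f u := by
        have := intervalIntegral.integral_comp_smul_deriv
          (f := τ) (f' := φ) (g := f) (a := a) (b := t)
          (fun x _ => hτ x) hφc.continuousOn hfc
        simpa [smul_eq_mul, Function.comp] using this
      have hsub : ((∫ x in Iic (τ t), f x) - ∫ x in Iic (τ a), f x) = ∫ u in τ a..τ t, f u :=
        intervalIntegral.integral_Iic_sub_Iic hfi.integrableOn hfi.integrableOn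
      have hioc : (∫ x in Ioc a t, g x) = ∫ x in a..t, g x :=
        (intervalIntegral.integral_of_le ht).symm
      have h1 : (∫ x in Iic a, g x) = ∫ x in Iic (τ a), f x := hcase1 a le_rfl
      rw [hsplit, h1, hioc]
      have : (∫ x in a..t, g x) = ∫ u in τ a..τ t, f u := hcov
      rw [this, ← hsub]
      ring
  -- total mass
  have htot : (∫ x, g x) = ∫ x, f x := by
    rw [← intervalIntegral.integral_Iic_add_Ioi (hgi.integrableOn) (hgi.integrableOn) (b := b),
      ← intervalIntegral.integral_Iic_add_Ioi (hfi.integrableOn) (hfi.integrableOn) (b := b + δ1)]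
    congr 1
    · rw [hmain b, hτ1 b le_rfl]
    · rw [← setIntegral_congr_fun measurableSet_Ioi
        (heqb.mono Ioi_subset_Ici_self), shift_Ioi]
  exact ⟨hgc, hg0, hgi, htot, hmain⟩


lemma int_affine (u v q e : ℝ) :
    ∫ s in u..v, (1 - q * (s - e)) = (v - u) - q * ((v - e) ^ 2 - (u - e) ^ 2) / 2 := by
  have h1 : IntervalIntegrable (fun _ : ℝ => (1:ℝ)) volume u v :=
    continuous_const.intervalIntegrable u v
  have h2 : IntervalIntegrable (fun s : ℝ => q * (s - e)) volume u v :=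
    (continuous_const.mul (continuous_id.sub continuous_const)).intervalIntegrable u v
  rw [intervalIntegral.integral_sub h1 h2, intervalIntegral.integral_const,
    intervalIntegral.integral_const_mul]
  have h3 : (∫ s in u..v, (s - e)) = ((v - e) ^ 2 - (u - e) ^ 2) / 2 := by
    rw [intervalIntegral.integral_comp_sub_right (fun x => x) e, integral_id]
  rw [h3]
  simp
  ring

set_option maxHeartbeats 1000000 in
lemma construct (a b δ0 δ1 : ℝ) (hab : a < b) (hδ : 0 < δ0 - δ1) (hδ2 : δ0 - δ1 < b - a) :
    ∃ φ τ : ℝ → ℝ, Continuous φ ∧ (∀ x, 0 ≤ φ x) ∧ (∀ t, HasDerivAt τ (φ t) t) ∧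
      (∀ t ≤ a, τ t = t + δ0) ∧ (∀ t, b ≤ t → τ t = t + δ1) ∧
      (∀ t ≤ a, φ t = 1) ∧ (∀ t, b ≤ t → φ t = 1) := by
  obtain ⟨L, hL⟩ : ∃ x : ℝ, x = b - a := ⟨_, rfl⟩
  have hL0 : 0 < L := by rw [hL]; linarith
  have hδ2' : δ0 - δ1 < L := by rw [hL]; exact hδ2
  obtain ⟨c, hc⟩ : ∃ x : ℝ, x = 1 - (δ0 - δ1) / L := ⟨_, rfl⟩
  have hc0 : 0 < c := by
    have : (δ0 - δ1) / L < 1 := (div_lt_one hL0).2 hδ2'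
    rw [hc]; linarith
  have hc1 : c < 1 := by
    have : 0 < (δ0 - δ1) / L := div_pos hδ hL0
    rw [hc]; linarith
  have hcL : c * L = L - (δ0 - δ1) := by
    rw [hc]; field_simp
  obtain ⟨p, hp⟩ : ∃ x : ℝ, x = c ^ 2 := ⟨_, rfl⟩
  have hp0 : 0 < p := by rw [hp]; positivity
  have hp1 : p < 1 := by rw [hp]; nlinarith
  have h1c : (0:ℝ) < 1 + c := by linarith
  obtain ⟨r, hr⟩ : ∃ x : ℝ, x = L * c / (1 + c) := ⟨_, rfl⟩
  have hr0 : 0 < r := by rw [hr]; positivity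
  have hrL : r * (1 + c) = L * c := by rw [hr]; field_simp
  have h2r : 2 * r < L := by nlinarith [hrL]
  obtain ⟨q, hq⟩ : ∃ x : ℝ, x = (1 - p) / r := ⟨_, rfl⟩
  have hq0 : 0 < q := by rw [hq]; exact div_pos (by linarith) hr0
  have hqr : q * r = 1 - p := by rw [hq]; field_simp
  set φ : ℝ → ℝ := fun t => max p (min 1 (1 - q * min (t - a) (b - t))) with hφ
  have hφc : Continuous φ := by
    apply continuous_const.max
    apply continuous_const.min
    exact continuous_const.sub (continuous_const.mul
      ((continuous_id.sub continuous_const).min (continuous_const.sub continuous_id)))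
  have hφ0 : ∀ x, 0 ≤ φ x := fun x => le_trans hp0.le (le_max_left _ _)
  have hφa : ∀ t ≤ a, φ t = 1 := by
    intro t ht
    have hmin : min (t - a) (b - t) = t - a := min_eq_left (by linarith)
    have h1 : (1:ℝ) ≤ 1 - q * (t - a) := by nlinarith
    simp only [hφ, hmin, min_eq_left h1, max_eq_right hp1.le]
  have hφb : ∀ t, b ≤ t → φ t = 1 := by
    intro t ht
    have hmin : min (t - a) (b - t) = b - t := min_eq_right (by linarith)
    have h1 : (1:ℝ) ≤ 1 - q * (b - t) := by nlinarith
    simp only [hφ, hmin, min_eq_left h1, max_eq_right hp1.le]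
  set τ : ℝ → ℝ := fun t => a + δ0 + ∫ s in a..t, φ s with hτ
  have hτd : ∀ t, HasDerivAt τ (φ t) t := by
    intro t
    have := intervalIntegral.integral_hasDerivAt_right
      (hφc.intervalIntegrable a t)
      (hφc.stronglyMeasurable.stronglyMeasurableAtFilter)
      hφc.continuousAt
    exact this.const_add (a + δ0)
  have hint1 : ∀ u v : ℝ, (∀ s ∈ uIcc u v, φ s = 1) → (∫ s in u..v, φ s) = v - u := by
    intro u v h
    rw [intervalIntegral.integral_congr (g := fun _ => (1:ℝ)) h,
      intervalIntegral.integral_const]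
    simp
  have hτ0 : ∀ t ≤ a, τ t = t + δ0 := by
    intro t ht
    have : (∫ s in a..t, φ s) = t - a := by
      apply hint1
      intro s hs
      exact hφa s (le_trans hs.2 (by simp [uIcc, ht, max_eq_left ht]))
    simp only [hτ, this]; ring
  -- the integral over [a,b]
  have hIab : (∫ s in a..b, φ s) = c * L := by
    have hii : ∀ u v : ℝ, IntervalIntegrable φ volume u v := fun u v =>
      hφc.intervalIntegrable u v
    have hsplit : (∫ s in a..(a+r), φ s) + (∫ s in (a+r)..(b-r), φ s) +
        (∫ s in (b-r)..b, φ s) = ∫ s in a..b, φ s := by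
      rw [intervalIntegral.integral_add_adjacent_intervals (hii _ _) (hii _ _),
        intervalIntegral.integral_add_adjacent_intervals (hii _ _) (hii _ _)]
    have e1 : (∫ s in a..(a+r), φ s) = ∫ s in a..(a+r), (1 - q * (s - a)) := by
      apply intervalIntegral.integral_congr
      intro s hs
      rw [uIcc_of_le (by linarith)] at hs
      obtain ⟨hs1, hs2⟩ := hs
      have hmin : min (s - a) (b - s) = s - a := min_eq_left (by linarith)
      have hle1 : 1 - q * (s - a) ≤ 1 := by nlinarith
      have hgep : p ≤ 1 - q * (s - a) := by nlinarith
      simp only [hφ, hmin, min_eq_right hle1, max_eq_right hgep]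
    have e2 : (∫ s in (a+r)..(b-r), φ s) = (b - r - (a + r)) * p := by
      rw [intervalIntegral.integral_congr (g := fun _ => p) ?_,
        intervalIntegral.integral_const, smul_eq_mul]
      intro s hs
      rw [uIcc_of_le (by linarith)] at hs
      obtain ⟨hs1, hs2⟩ := hs
      have hmin : r ≤ min (s - a) (b - s) := le_min (by linarith) (by linarith)
      have hlep : 1 - q * min (s - a) (b - s) ≤ p := by nlinarith
      simp only [hφ, min_eq_right (le_trans hlep hp1.le), max_eq_left hlep]
    have e3 : (∫ s in (b-r)..b, φ s) = ∫ s in (b-r)..b, (1 - (-q) * (s - b)) := by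
      apply intervalIntegral.integral_congr
      intro s hs
      rw [uIcc_of_le (by linarith)] at hs
      obtain ⟨hs1, hs2⟩ := hs
      have hmin : min (s - a) (b - s) = b - s := min_eq_right (by linarith)
      have hle1 : 1 - q * (b - s) ≤ 1 := by nlinarith
      have hgep : p ≤ 1 - q * (b - s) := by nlinarith
      have : 1 - (-q) * (s - b) = 1 - q * (b - s) := by ring
      simp only [hφ, hmin, min_eq_right hle1, max_eq_right hgep, this]
    rw [← hsplit, e1, e2, e3, int_affine, int_affine]
    linear_combination (-r) * hqr + (1 - c) * hrL + (L - r) * hp + (-p) * hL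
  have hτ1 : ∀ t, b ≤ t → τ t = t + δ1 := by
    intro t ht
    have hbt : (∫ s in b..t, φ s) = t - b := by
      apply hint1
      intro s hs
      refine hφb s ?_
      rw [uIcc_of_le ht] at hs
      exact hs.1
    have : (∫ s in a..t, φ s) = (∫ s in a..b, φ s) + ∫ s in b..t, φ s :=
      (intervalIntegral.integral_add_adjacent_intervals
        (hφc.intervalIntegrable a b) (hφc.intervalIntegrable b t)).symm
    simp only [hτ, this, hIab, hbt]
    have : c * L = L - (δ0 - δ1) := hcL
    rw [hL] at this
    linarith
  exact ⟨φ, τ, hφc, hφ0, hτd, hτ0, hτ1, hφa, hφb⟩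


/-- Income CDF generated by ability PDF `f` and elasticity `ε` in the kink model. -/
noncomputable def genCDF (k s0 s1 : ℝ) (f : ℝ → ℝ) (ε : ℝ) : ℝ → ℝ :=
  fun u => if u < k then ∫ x in Set.Iic (u - ε * s0), f x
           else ∫ x in Set.Iic (u - ε * s1), f x

/-- Non-identification with a kink. For any `0 < ε < ε'` and any
continuous PDF `f` of `n*`, there exists another continuous PDF `g` such that
`(g, ε')` generates the same observed income distribution as `(f, ε)`. -/
theorem kink_not_identified
    (k s0 s1 : ℝ) (hs : s1 < s0) (ε ε' : ℝ) (hε : 0 < ε) (hεε : ε < ε')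
    (f : ℝ → ℝ) (hfc : Continuous f) (hf0 : ∀ x, 0 ≤ f x)
    (hfi : Integrable f) (hf1 : (∫ x, f x) = 1) :
    ∃ g : ℝ → ℝ, Continuous g ∧ (∀ x, 0 ≤ g x) ∧ Integrable g ∧ (∫ x, g x) = 1 ∧
      ∀ u, genCDF k s0 s1 g ε' u = genCDF k s0 s1 f ε u := by
  have hε' : 0 < ε' := hε.trans hεε
  obtain ⟨φ, τ, hφc, hφ0, hτd, hτ0, hτ1, hφa, hφb⟩ :=
    construct (k - ε' * s0) (k - ε' * s1) ((ε' - ε) * s0) ((ε' - ε) * s1)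
      (by nlinarith) (by nlinarith) (by nlinarith)
  obtain ⟨hgc, hg0, hgi, htot, hmain⟩ :=
    key f hfc hf0 hfi φ τ hφc hφ0 hτd (k - ε' * s0) (k - ε' * s1)
      ((ε' - ε) * s0) ((ε' - ε) * s1) (by nlinarith) hτ0 hτ1 hφa hφb
  refine ⟨fun t => φ t * f (τ t), hgc, hg0, hgi, by rw [htot, hf1], ?_⟩
  intro u
  by_cases hu : u < k
  · simp only [genCDF, if_pos hu]
    rw [hmain (u - ε' * s0), hτ0 (u - ε' * s0) (by linarith)]
    have h : u - ε' * s0 + (ε' - ε) * s0 = u - ε * s0 := by ring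
    rw [h]
  · simp only [genCDF, if_neg hu]
    push_neg at hu
    rw [hmain (u - ε' * s1), hτ1 (u - ε' * s1) (by linarith)]
    have h : u - ε' * s1 + (ε' - ε) * s1 = u - ε * s1 := by ring
    rw [h]
end

section
/- Let the family of ability CDFs be the Gaussian location–scale family F(n) = Φ((n-μ)/σ) with μ ∈ ℝ and σ > 0. Fix s₀ ≠ s₁. If for some e ≥ 0, μ', σ' > 0 we have Φ((u - e·s₀ - μ')/σ') = Φ((u - ε·s₀ - μ)/σ) for all u < k and Φ((u - e·s₁ - μ')/σ') = Φ((u - ε·s₁ - μ)/σ) for all u ≥ k, then e = ε, μ' = μ, and σ' = σ. -/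
open MeasureTheory

/-- The standard normal CDF. -/
noncomputable def Phi (x : ℝ) : ℝ :=
  ∫ t in Set.Iic x, Real.exp (-(t ^ 2) / 2) / Real.sqrt (2 * Real.pi)

/-!
Since `Φ` is injective, each tail equation says that the two affine maps
`u ↦ (u - e s - μ') / σ'` and `u ↦ (u - ε s - μ) / σ` agree on a half-line, hence have equal
slopes `1/σ' = 1/σ` and equal intercepts `e s + μ' = ε s + μ`. Doing this for `s = s₀` and
`s = s₁` gives two values of the affine map `s ↦ e s + μ'` and of `s ↦ ε s + μ`, which therefore
coincide since `s₀ ≠ s₁`.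
-/

open ProbabilityTheory

lemma Phi_eq_integral_gaussianPDFReal (x : ℝ) :
    Phi x = ∫ t in Set.Iic x, gaussianPDFReal 0 1 t := by
  simp [Phi, gaussianPDFReal, div_eq_inv_mul, mul_comm]

lemma Phi_strictMono : StrictMono Phi := by
  intro x y hxy
  have hint : Integrable (gaussianPDFReal 0 1) := integrable_gaussianPDFReal 0 1
  have hdiff : Phi y - Phi x = ∫ t in x..y, gaussianPDFReal 0 1 t := by
    rw [Phi_eq_integral_gaussianPDFReal, Phi_eq_integral_gaussianPDFReal]
    exact intervalIntegral.integral_Iic_sub_Iic hint.integrableOn hint.integrableOn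
  have hpos : 0 < ∫ t in x..y, gaussianPDFReal 0 1 t :=
    intervalIntegral.intervalIntegral_pos_of_pos_on hint.intervalIntegrable
      (fun t _ => gaussianPDFReal_pos 0 1 t one_ne_zero) hxy
  linarith

lemma eq_and_eq_of_mul_add_eq_mul_add {R : Type*} [CommRing R] [NoZeroDivisors R]
    {a b c d x y : R} (hxy : x ≠ y) (hx : a * x + b = c * x + d) (hy : a * y + b = c * y + d) :
    a = c ∧ b = d := by
  have hac : (a - c) * (x - y) = 0 := by linear_combination hx - hy
  obtain rfl : a = c := sub_eq_zero.mp ((mul_eq_zero.mp hac).resolve_right (sub_ne_zero.mpr hxy))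
  exact ⟨rfl, add_left_cancel hx⟩

lemma eq_and_eq_of_sub_div_eq_sub_div {K : Type*} [Field K] {a b σ σ' x y : K}
    (hσ : σ ≠ 0) (hxy : x ≠ y) (hx : (x - a) / σ' = (x - b) / σ)
    (hy : (y - a) / σ' = (y - b) / σ) :
    σ' = σ ∧ a = b := by
  obtain ⟨hslope, hintercept⟩ := eq_and_eq_of_mul_add_eq_mul_add (a := σ'⁻¹) (b := -a * σ'⁻¹)
    (c := σ⁻¹) (d := -b * σ⁻¹) hxy (by linear_combination hx) (by linear_combination hy)
  obtain rfl : σ' = σ := inv_inj.mp hslope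
  exact ⟨rfl, neg_inj.mp (mul_right_cancel₀ (inv_ne_zero hσ) hintercept)⟩

lemma eq_and_eq_of_Phi_sub_div_eq {a b σ σ' x y : ℝ} (hσ : σ ≠ 0) (hxy : x ≠ y)
    (hx : Phi ((x - a) / σ') = Phi ((x - b) / σ)) (hy : Phi ((y - a) / σ') = Phi ((y - b) / σ)) :
    σ' = σ ∧ a = b :=
  eq_and_eq_of_sub_div_eq_sub_div hσ hxy (Phi_strictMono.injective hx)
    (Phi_strictMono.injective hy)

theorem gaussian_tail_identification_general
    (k s0 s1 ε μ σ μ' σ' e : ℝ) (hs : s0 ≠ s1)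
    (hσ : 0 < σ)
    (h1 : ∀ u < k, Phi ((u - e * s0 - μ') / σ') = Phi ((u - ε * s0 - μ) / σ))
    (h2 : ∀ u, k ≤ u → Phi ((u - e * s1 - μ') / σ') = Phi ((u - ε * s1 - μ) / σ)) :
    e = ε ∧ μ' = μ ∧ σ' = σ := by
  simp only [sub_sub] at h1 h2
  obtain ⟨hσσ', hs0⟩ := eq_and_eq_of_Phi_sub_div_eq hσ.ne' (by norm_num : k - 2 ≠ k - 1)
    (h1 _ (by linarith)) (h1 _ (by linarith))
  obtain ⟨-, hs1⟩ := eq_and_eq_of_Phi_sub_div_eq hσ.ne' (by norm_num : k ≠ k + 1)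
    (h2 _ le_rfl) (h2 _ (by linarith))
  obtain ⟨he, hμ⟩ := eq_and_eq_of_mul_add_eq_mul_add hs hs0 hs1
  exact ⟨he, hμ, hσσ'⟩

/-- The Gaussian location–scale family satisfies the
tail-identification condition: matching the two tails pins down `(e, μ', σ')`. -/
theorem gaussian_tail_identification
    (k s0 s1 ε μ σ μ' σ' e : ℝ) (hs : s0 ≠ s1) (hε : 0 ≤ ε)
    (hσ : 0 < σ) (hσ' : 0 < σ') (he : 0 ≤ e)
    (h1 : ∀ u < k, Phi ((u - e * s0 - μ') / σ') = Phi ((u - ε * s0 - μ) / σ))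
    (h2 : ∀ u, k ≤ u → Phi ((u - e * s1 - μ') / σ') = Phi ((u - ε * s1 - μ) / σ)) :
    e = ε ∧ μ' = μ ∧ σ' = σ :=
  gaussian_tail_identification_general k s0 s1 ε μ σ μ' σ' e hs hσ h1 h2
end

section
/- Let f: [0, L] → [0,∞) be continuous, Lipschitz with constant M > 0, with boundary values f(0) = a and f(L) = b where a, b ≥ 0. If M·L ≥ |b - a|, then the maximal possible value of ∫₀^L f is (M²L² + 2ML(a+b) - (a-b)²)/(4M), attained by the 'hat' function consisting of a segment of slope +M from (0,a) and a segment of slope -M into (L,b). -/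
/-- Admissible densities on `[0,L]`: continuous, nonnegative, `M`-Lipschitz,
with boundary values `a` and `b`. -/
def Admissible (M L a b : ℝ) (f : ℝ → ℝ) : Prop :=
  ContinuousOn f (Set.Icc 0 L) ∧ (∀ x ∈ Set.Icc 0 L, 0 ≤ f x) ∧
  (∀ x ∈ Set.Icc 0 L, ∀ y ∈ Set.Icc 0 L, |f x - f y| ≤ M * |x - y|) ∧
  f 0 = a ∧ f L = b

lemma linear_integral (p q u v : ℝ) :
    (∫ x in u..v, p + q * x) = p * (v - u) + q * (v ^ 2 - u ^ 2) / 2 := by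
  have h1 : (∫ x in u..v, p + q * x)
      = (∫ x in u..v, p) + ∫ x in u..v, q * x := by
    apply intervalIntegral.integral_add
    · exact intervalIntegrable_const
    · exact (continuous_const.mul continuous_id).intervalIntegrable _ _
  rw [h1, intervalIntegral.integral_const, intervalIntegral.integral_const_mul,
    integral_id]
  simp only [smul_eq_mul]
  ring

/-- The maximal possible integral of an admissible function is
`(M²L² + 2ML(a+b) - (a-b)²)/(4M)`, attained by the "hat" function
`x ↦ min (a + Mx) (b + M(L - x))`. -/
theorem max_area_hat
    (M L a b : ℝ) (hM : 0 < M) (hL : 0 < L) (ha : 0 ≤ a) (hb : 0 ≤ b)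
    (hML : |b - a| ≤ M * L) :
    IsGreatest {I : ℝ | ∃ f : ℝ → ℝ, Admissible M L a b f ∧ (∫ x in (0:ℝ)..L, f x) = I}
      ((M ^ 2 * L ^ 2 + 2 * M * L * (a + b) - (a - b) ^ 2) / (4 * M)) ∧
    Admissible M L a b (fun x => min (a + M * x) (b + M * (L - x))) ∧
    (∫ x in (0:ℝ)..L, min (a + M * x) (b + M * (L - x)))
      = (M ^ 2 * L ^ 2 + 2 * M * L * (a + b) - (a - b) ^ 2) / (4 * M) := by
  rw [abs_le] at hML
  obtain ⟨hML1, hML2⟩ := hML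
  set g : ℝ → ℝ := fun x => min (a + M * x) (b + M * (L - x)) with hg
  set c : ℝ := (M * L + b - a) / (2 * M) with hc
  have hc0 : 0 ≤ c := by
    apply div_nonneg _ (by linarith)
    linarith
  have hcL : c ≤ L := by
    rw [div_le_iff₀ (by linarith)]
    linarith
  -- admissibility of g
  have hgcont : ContinuousOn g (Set.Icc 0 L) :=
    ((continuous_const.add (continuous_const.mul continuous_id)).min
      (continuous_const.add (continuous_const.mul (continuous_const.sub continuous_id)))).continuousOn
  have hglip : ∀ x ∈ Set.Icc 0 L, ∀ y ∈ Set.Icc 0 L, |g x - g y| ≤ M * |x - y| := by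
    intro x _ y _
    refine (abs_min_sub_min_le_max _ _ _ _).trans ?_
    have h1 : |a + M * x - (a + M * y)| = M * |x - y| := by
      rw [show a + M * x - (a + M * y) = M * (x - y) by ring, abs_mul, abs_of_pos hM]
    have h2 : |b + M * (L - x) - (b + M * (L - y))| = M * |x - y| := by
      rw [show b + M * (L - x) - (b + M * (L - y)) = M * (y - x) by ring, abs_mul,
        abs_of_pos hM, abs_sub_comm]
    rw [h1, h2, max_self]
  have hgnn : ∀ x ∈ Set.Icc 0 L, 0 ≤ g x := by
    rintro x ⟨hx0, hxL⟩
    apply le_min <;> nlinarith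
  have hg0 : g 0 = a := by
    simp only [hg, mul_zero, add_zero, sub_zero]
    exact min_eq_left (by linarith)
  have hgL : g L = b := by
    simp only [hg, sub_self, mul_zero, add_zero]
    exact min_eq_right (by nlinarith)
  have hgadm : Admissible M L a b g := ⟨hgcont, hgnn, hglip, hg0, hgL⟩
  -- integral of g
  have hgint : (∫ x in (0:ℝ)..L, g x)
      = (M ^ 2 * L ^ 2 + 2 * M * L * (a + b) - (a - b) ^ 2) / (4 * M) := by
    have hsplit : (∫ x in (0:ℝ)..L, g x)
        = (∫ x in (0:ℝ)..c, g x) + ∫ x in c..L, g x := by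
      rw [intervalIntegral.integral_add_adjacent_intervals]
      · exact (hgcont.mono (Set.Icc_subset_Icc le_rfl hcL)).intervalIntegrable_of_Icc hc0
      · exact (hgcont.mono (Set.Icc_subset_Icc hc0 le_rfl)).intervalIntegrable_of_Icc hcL
    have h1 : (∫ x in (0:ℝ)..c, g x) = ∫ x in (0:ℝ)..c, a + M * x := by
      apply intervalIntegral.integral_congr
      intro x hx
      rw [Set.uIcc_of_le hc0] at hx
      have hx2 : x ≤ (M * L + b - a) / (2 * M) := hc ▸ hx.2
      rw [le_div_iff₀ (show (0:ℝ) < 2*M by linarith)] at hx2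
      exact min_eq_left (by nlinarith)
    have h2 : (∫ x in c..L, g x) = ∫ x in c..L, (b + M * L) + (-M) * x := by
      apply intervalIntegral.integral_congr
      intro x hx
      rw [Set.uIcc_of_le hcL] at hx
      have hx1 : (M * L + b - a) / (2 * M) ≤ x := hc ▸ hx.1
      rw [div_le_iff₀ (show (0:ℝ) < 2*M by linarith)] at hx1
      have : g x = b + M * (L - x) := min_eq_right (by nlinarith)
      rw [this]; ring
    rw [hsplit, h1, h2, linear_integral, linear_integral, hc]
    field_simp
    ring
  refine ⟨⟨⟨g, hgadm, hgint⟩, ?_⟩, hgadm, hgint⟩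
  rintro I ⟨f, ⟨hfc, _, hfl, hf0, hfL⟩, rfl⟩
  rw [← hgint]
  have hfle : ∀ x ∈ Set.Icc 0 L, f x ≤ g x := by
    rintro x ⟨hx0, hxL⟩
    have h0 : (0:ℝ) ∈ Set.Icc 0 L := ⟨le_rfl, hL.le⟩
    have hLm : L ∈ Set.Icc 0 L := ⟨hL.le, le_rfl⟩
    have hxm : x ∈ Set.Icc 0 L := ⟨hx0, hxL⟩
    have h1 := (le_abs_self _).trans (hfl x hxm 0 h0)
    have h2 := (le_abs_self _).trans (hfl x hxm L hLm)
    rw [hf0, sub_zero, abs_of_nonneg hx0] at h1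
    rw [hfL, abs_of_nonpos (by linarith)] at h2
    apply le_min <;> nlinarith
  exact intervalIntegral.integral_mono_on hL.le
    (hfc.intervalIntegrable_of_Icc hL.le)
    (hgcont.intervalIntegrable_of_Icc hL.le) hfle
end

section
/- Let f: [0,L] → [0,∞) be continuous, M-Lipschitz, with f(0) = a, f(L) = b, a,b ≥ 0, and M·L ≥ |b-a|. If additionally a + b ≥ M·L, then the minimal possible value of ∫₀^L f is (−M²L² + 2ML(a+b) + (a−b)²)/(4M); if a + b < M·L, the infimum of ∫₀^L f equals (a² + b²)/(2M). -/
open intervalIntegral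

theorem max_max_zero_eq_add_of_add_nonpos {p q : ℝ} (h : p + q ≤ 0) :
    max p (max q 0) = max p 0 + max q 0 := by
  simp only [max_def]
  split_ifs <;> linarith

theorem max_max_zero_eq_of_add_nonneg {p q : ℝ} (h : 0 ≤ p + q) :
    max p (max q 0) = q + max (p - q) 0 := by
  simp only [max_def]
  split_ifs <;> linarith

theorem integral_max_sub_mul_zero {M a L : ℝ} (hM : 0 < M) (ha : 0 ≤ a) (haL : a ≤ M * L) :
    ∫ x in (0:ℝ)..L, max (a - M * x) 0 = a ^ 2 / (2 * M) := by
  set c := a / M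
  have hc : 0 ≤ c := div_nonneg ha hM.le
  have hcL : c ≤ L := (div_le_iff₀' hM).2 haL
  have hMc : M * c = a := mul_div_cancel₀ a hM.ne'
  have hcont : Continuous fun x => max (a - M * x) 0 := by fun_prop
  rw [← integral_add_adjacent_intervals (hcont.intervalIntegrable 0 c)
    (hcont.intervalIntegrable c L)]
  have h₁ : ∫ x in (0:ℝ)..c, max (a - M * x) 0 = ∫ x in (0:ℝ)..c, (a - M * x) := by
    refine integral_congr fun x hx => max_eq_left ?_
    rw [Set.uIcc_of_le hc] at hx
    nlinarith [hx.2]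
  have h₂ : ∫ x in c..L, max (a - M * x) 0 = ∫ _ in c..L, (0:ℝ) := by
    refine integral_congr fun x hx => max_eq_right ?_
    rw [Set.uIcc_of_le hcL] at hx
    nlinarith [hx.1]
  rw [h₁, h₂, integral_sub intervalIntegrable_const
    ((continuous_const_mul M).intervalIntegrable _ _), integral_const_mul]
  simp only [integral_const, integral_id, smul_eq_mul, integral_zero]
  rw [← hMc]
  field_simp
  ring

def invertedHat (M L a b : ℝ) (x : ℝ) : ℝ :=
  max (a - M * x) (max (b - M * (L - x)) 0)

section InvertedHat

variable {M L a b : ℝ}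

theorem continuous_invertedHat : Continuous (invertedHat M L a b) := by
  unfold invertedHat
  fun_prop

theorem abs_invertedHat_sub_le (hM : 0 ≤ M) (x y : ℝ) :
    |invertedHat M L a b x - invertedHat M L a b y| ≤ M * |x - y| := by
  have h₁ : |(a - M * x) - (a - M * y)| = M * |x - y| := by
    rw [show (a - M * x) - (a - M * y) = M * (y - x) by ring, abs_mul, abs_of_nonneg hM,
      abs_sub_comm]
  have h₂ : |(b - M * (L - x)) - (b - M * (L - y))| = M * |x - y| := by
    rw [show (b - M * (L - x)) - (b - M * (L - y)) = M * (x - y) by ring, abs_mul,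
      abs_of_nonneg hM]
  refine (abs_max_sub_max_le_max _ _ _ _).trans (max_le h₁.le ?_)
  refine (abs_max_sub_max_le_max _ _ _ _).trans (max_le h₂.le ?_)
  simpa using mul_nonneg hM (abs_nonneg (x - y))

theorem admissible_invertedHat (hM : 0 ≤ M) (ha : 0 ≤ a) (hb : 0 ≤ b)
    (hML : |b - a| ≤ M * L) :
    Admissible M L a b (invertedHat M L a b) := by
  obtain ⟨hab, hba⟩ := abs_le.1 hML
  refine ⟨continuous_invertedHat.continuousOn, fun x _ => le_max_of_le_right (le_max_right _ _),
    fun x _ y _ => abs_invertedHat_sub_le hM x y, ?_, ?_⟩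
  · simp only [invertedHat, mul_zero, sub_zero]
    exact max_eq_left (max_le (by linarith) ha)
  · simp only [invertedHat, sub_self, mul_zero, sub_zero, max_eq_left hb]
    exact max_eq_right (by linarith)

theorem invertedHat_le_of_admissible {f : ℝ → ℝ} (hf : Admissible M L a b f) {x : ℝ}
    (hx : x ∈ Set.Icc 0 L) : invertedHat M L a b x ≤ f x := by
  obtain ⟨-, hf_nonneg, hf_lip, hf0, hfL⟩ := hf
  have hL : 0 ≤ L := hx.1.trans hx.2
  have h₀ := (abs_le.1 (hf_lip x hx 0 ⟨le_rfl, hL⟩)).1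
  have h₁ := (abs_le.1 (hf_lip x hx L ⟨hL, le_rfl⟩)).1
  rw [hf0, sub_zero, abs_of_nonneg hx.1] at h₀
  rw [hfL, abs_sub_comm, abs_of_nonneg (sub_nonneg.2 hx.2)] at h₁
  exact max_le (by linarith) (max_le (by linarith) (hf_nonneg x hx))

theorem isLeast_integral_invertedHat (hM : 0 ≤ M) (hL : 0 ≤ L) (ha : 0 ≤ a) (hb : 0 ≤ b)
    (hML : |b - a| ≤ M * L) :
    IsLeast {I : ℝ | ∃ f : ℝ → ℝ, Admissible M L a b f ∧ (∫ x in (0:ℝ)..L, f x) = I}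
      (∫ x in (0:ℝ)..L, invertedHat M L a b x) := by
  refine ⟨⟨_, admissible_invertedHat hM ha hb hML, rfl⟩, ?_⟩
  rintro _ ⟨f, hf, rfl⟩
  refine integral_mono_on hL (continuous_invertedHat.intervalIntegrable _ _) ?_
    fun x hx => invertedHat_le_of_admissible hf hx
  exact hf.1.intervalIntegrable_of_Icc hL

theorem integral_invertedHat_of_le (hM : 0 < M) (hML : |b - a| ≤ M * L) (h : M * L ≤ a + b) :
    ∫ x in (0:ℝ)..L, invertedHat M L a b x =
      (-(M ^ 2 * L ^ 2) + 2 * M * L * (a + b) + (a - b) ^ 2) / (4 * M) := by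
  obtain ⟨hab, hba⟩ := abs_le.1 hML
  have hsplit : invertedHat M L a b =
      fun x => (b - M * L + M * x) + max ((a - b + M * L) - 2 * M * x) 0 := by
    ext x
    rw [invertedHat, max_max_zero_eq_of_add_nonneg (by linarith)]
    ring_nf
  have hramp := integral_max_sub_mul_zero (L := L) (by positivity : 0 < 2 * M)
    (by linarith : 0 ≤ a - b + M * L) (by linarith)
  rw [hsplit, integral_add (Continuous.intervalIntegrable (by fun_prop) _ _)
    (Continuous.intervalIntegrable (by fun_prop) _ _), hramp,
    integral_add intervalIntegrable_const ((continuous_const_mul M).intervalIntegrable _ _),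
    integral_const_mul]
  simp only [integral_const, integral_id, smul_eq_mul]
  field_simp
  ring

theorem integral_invertedHat_of_lt (hM : 0 < M) (ha : 0 ≤ a) (hb : 0 ≤ b) (h : a + b < M * L) :
    ∫ x in (0:ℝ)..L, invertedHat M L a b x = (a ^ 2 + b ^ 2) / (2 * M) := by
  have hsplit : invertedHat M L a b =
      fun x => max (a - M * x) 0 + (fun y => max (b - M * y) 0) (L - x) := by
    ext x
    exact max_max_zero_eq_add_of_add_nonpos (by linarith)
  rw [hsplit, integral_add (Continuous.intervalIntegrable (by fun_prop) _ _)
    (Continuous.intervalIntegrable (by fun_prop) _ _),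
    integral_comp_sub_left (fun y => max (b - M * y) 0), sub_self, sub_zero,
    integral_max_sub_mul_zero hM ha (by linarith),
    integral_max_sub_mul_zero hM hb (by linarith), add_div]

end InvertedHat

/-- If `a + b ≥ ML` the minimal possible integral of an admissible
function is `(-M²L² + 2ML(a+b) + (a-b)²)/(4M)` (attained); if `a + b < ML` the
infimum of the possible integrals equals `(a² + b²)/(2M)`. -/
theorem min_area_inverted_hat
    (M L a b : ℝ) (hM : 0 < M) (hL : 0 < L) (ha : 0 ≤ a) (hb : 0 ≤ b)
    (hML : |b - a| ≤ M * L) :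
    (M * L ≤ a + b →
      IsLeast {I : ℝ | ∃ f : ℝ → ℝ, Admissible M L a b f ∧ (∫ x in (0:ℝ)..L, f x) = I}
        ((-(M ^ 2 * L ^ 2) + 2 * M * L * (a + b) + (a - b) ^ 2) / (4 * M))) ∧
    (a + b < M * L →
      sInf {I : ℝ | ∃ f : ℝ → ℝ, Admissible M L a b f ∧ (∫ x in (0:ℝ)..L, f x) = I}
        = (a ^ 2 + b ^ 2) / (2 * M)) := by
  have hleast := isLeast_integral_invertedHat hM.le hL.le ha hb hML
  refine ⟨fun h => ?_, fun h => ?_⟩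
  · rwa [integral_invertedHat_of_le hM hML h] at hleast
  · rw [hleast.csInf_eq, integral_invertedHat_of_lt hM ha hb h]
end

section
/- Fix K > 0, t₁ ∈ [0,1), I₁ ∈ ℝ, C > 0, and Y^I > K such that Y^I > (C − I₁ + K(1−t₁))/(1−t₁) > K. Define g(ε) = Y^I + εK(K/Y^I)^{1/ε} and h(ε) = (1+ε)(C − I₁ + K(1−t₁))/(1−t₁) for ε > 0. Then there exists a unique ε > 0 with g(ε) = h(ε). -/
/-!
Subtracting `Y + ε M` turns the equation into `f ε = Y - M` with
`f ε = (M - K) ε + K ε (1 - (K / Y) ^ (1 / ε))`, where `M` is the right-hand side's constant and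
`K < M < Y`. Both summands of `f` are strictly increasing on `(0, ∞)`, the second because secant
slopes of `exp` increase. Since `0 < (K / Y) ^ (1 / ε) ≤ 1`, `f` lies between `(M - K) ε` and
`M ε`, so it crosses the level `Y - M` between `(Y - M) / M` and `(Y - M) / (M - K)`, exactly once.
-/

open Real Set

theorem StrictMonoOn.existsUnique_eq_of_le_of_le {X α : Type*} [LinearOrder X] [TopologicalSpace X]
    [LinearOrder α] [TopologicalSpace α] [OrderClosedTopology α] {s : Set X} {f : X → α}
    {a b : X} {y : α} (hf : StrictMonoOn f s) (hs : IsPreconnected s) (hcont : ContinuousOn f s)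
    (ha : a ∈ s) (hb : b ∈ s) (hfa : f a ≤ y) (hfb : y ≤ f b) :
    ∃! x, x ∈ s ∧ f x = y := by
  obtain ⟨x, hx, hfx⟩ := hs.intermediate_value ha hb hcont ⟨hfa, hfb⟩
  exact ⟨x, ⟨hx, hfx⟩, fun z ⟨hz, hfz⟩ => hf.injOn hz hx (hfz.trans hfx.symm)⟩

/-- With `u = log r / ε`, the function is `-log r` times the secant slope `(exp u - 1) / u` of the
strictly convex `exp` at `0`, which increases with `u`. -/
theorem strictMonoOn_mul_one_sub_rpow_one_div {r : ℝ} (hr0 : 0 < r) (hr1 : r < 1) :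
    StrictMonoOn (fun ε : ℝ => ε * (1 - r ^ (1 / ε))) (Ioi 0) := by
  intro a (ha : 0 < a) b (hb : 0 < b) hab
  have hL : log r < 0 := log_neg hr0 hr1
  have hsecant_form : ∀ ε : ℝ, ε ≠ 0 → ε * (1 - r ^ (1 / ε)) =
      -log r * ((exp (log r / ε) - exp 0) / (log r / ε - 0)) := by
    intro ε hε
    rw [rpow_def_of_pos hr0, exp_zero, sub_zero]
    field_simp [hL.ne]
    ring
  have hsecant := strictConvexOn_exp.secant_strict_mono (mem_univ 0) (mem_univ (log r / a))
    (mem_univ (log r / b)) (div_neg_of_neg_of_pos hL ha).ne (div_neg_of_neg_of_pos hL hb).ne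
    (by rw [div_lt_div_iff₀ ha hb]; nlinarith)
  simp only
  rw [hsecant_form a ha.ne', hsecant_form b hb.ne']
  exact mul_lt_mul_of_pos_left hsecant (neg_pos.2 hL)

theorem continuousOn_mul_one_sub_rpow_one_div {r : ℝ} (hr : r ≠ 0) :
    ContinuousOn (fun ε : ℝ => ε * (1 - r ^ (1 / ε))) (Ioi 0) := by
  intro ε (hε : 0 < ε)
  have : ε ≠ 0 := hε.ne'
  exact ContinuousAt.continuousWithinAt (by fun_prop (disch := assumption))

theorem mul_one_sub_rpow_one_div_mem_Icc {r ε : ℝ} (hr0 : 0 < r) (hr1 : r ≤ 1) (hε : 0 ≤ ε) :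
    ε * (1 - r ^ (1 / ε)) ∈ Icc 0 ε :=
  ⟨mul_nonneg hε (sub_nonneg.2 (rpow_le_one hr0.le hr1 (by positivity))),
    mul_le_of_le_one_right hε (by linarith [rpow_pos_of_pos hr0 (1 / ε)])⟩

theorem existsUnique_pos_add_mul_mul_rpow_eq {K M Y : ℝ} (hK : 0 < K) (hKM : K < M)
    (hMY : M < Y) :
    ∃! ε : ℝ, 0 < ε ∧ Y + ε * K * (K / Y) ^ (1 / ε) = (1 + ε) * M := by
  have hM : 0 < M := hK.trans hKM
  have hY : 0 < Y := hM.trans hMY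
  set r := K / Y
  have hr0 : 0 < r := div_pos hK hY
  have hr1 : r < 1 := (div_lt_one hY).2 (hKM.trans hMY)
  let f : ℝ → ℝ := fun ε => (M - K) * ε + K * (ε * (1 - r ^ (1 / ε)))
  have hf_mono : StrictMonoOn f (Ioi 0) := by
    intro a ha b hb hab
    have := strictMonoOn_mul_one_sub_rpow_one_div hr0 hr1 ha hb hab
    simp only [f]
    nlinarith
  have hf_cont : ContinuousOn f (Ioi 0) :=
    (continuousOn_const.mul continuousOn_id).add
      (continuousOn_const.mul (continuousOn_mul_one_sub_rpow_one_div hr0.ne'))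
  have ha : 0 < (Y - M) / M := div_pos (sub_pos.2 hMY) hM
  have hb : 0 < (Y - M) / (M - K) := div_pos (sub_pos.2 hMY) (sub_pos.2 hKM)
  have hfa : f ((Y - M) / M) ≤ Y - M := by
    have := mul_le_mul_of_nonneg_left (mul_one_sub_rpow_one_div_mem_Icc hr0 hr1.le ha.le).2 hK.le
    calc f ((Y - M) / M) ≤ M * ((Y - M) / M) := by simp only [f]; linarith
      _ = Y - M := by field_simp
  have hfb : Y - M ≤ f ((Y - M) / (M - K)) := by
    have := mul_nonneg hK.le (mul_one_sub_rpow_one_div_mem_Icc hr0 hr1.le hb.le).1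
    calc Y - M = (M - K) * ((Y - M) / (M - K)) := by field_simp [(sub_pos.2 hKM).ne']
      _ ≤ f ((Y - M) / (M - K)) := by simp only [f]; linarith
  refine (existsUnique_congr fun ε => and_congr Iff.rfl ?_).1 <|
    hf_mono.existsUnique_eq_of_le_of_le (convex_Ioi 0).isPreconnected hf_cont ha hb hfa hfb
  simp only [f]
  constructor <;> intro h <;> linarith

theorem notch_unique_elasticity_general
    (K t1 I1 C YI : ℝ) (hK : 0 < K)
    (hmid1 : K < (C - I1 + K * (1 - t1)) / (1 - t1))
    (hmid2 : (C - I1 + K * (1 - t1)) / (1 - t1) < YI) :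
    ∃! ε : ℝ, 0 < ε ∧
      YI + ε * K * (K / YI) ^ (1 / ε)
        = (1 + ε) * ((C - I1 + K * (1 - t1)) / (1 - t1)) :=
  existsUnique_pos_add_mul_mul_rpow_eq hK hmid1 hmid2

/-- The notch indifference equation
`Y^I + εK(K/Y^I)^{1/ε} = (1+ε)(C − I₁ + K(1−t₁))/(1−t₁)` has a unique solution
`ε > 0`. -/
theorem notch_unique_elasticity
    (K t1 I1 C YI : ℝ) (hK : 0 < K) (ht1a : 0 ≤ t1) (ht1b : t1 < 1) (hC : 0 < C)
    (hYK : K < YI)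
    (hmid1 : K < (C - I1 + K * (1 - t1)) / (1 - t1))
    (hmid2 : (C - I1 + K * (1 - t1)) / (1 - t1) < YI) :
    ∃! ε : ℝ, 0 < ε ∧
      YI + ε * K * (K / YI) ^ (1 / ε)
        = (1 + ε) * ((C - I1 + K * (1 - t1)) / (1 - t1)) :=
  notch_unique_elasticity_general K t1 I1 C YI hK hmid1 hmid2
end

section
/- Let g(ε) = Y^I + εK(K/Y^I)^{1/ε} for ε > 0 with 0 < K < Y^I. Then g is strictly increasing and strictly convex on (0,∞), with derivative g'(ε) = K(K/Y^I)^{1/ε}·(1 − (1/ε)·ln(K/Y^I)), second derivative g''(ε) = K(K/Y^I)^{1/ε}·(1/ε³)·(ln(K/Y^I))² > 0, and lim_{ε→∞} g'(ε) = K. -/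
/-!
With `a = K / Y ∈ (0, 1)` we have `g = Y + K · h` for `h ε = ε a^{1/ε}`. Differentiating twice,
`h' ε = a^{1/ε} (1 - log a / ε)` and `h'' ε = a^{1/ε} (log a)² / ε³`; both are positive because
`log a < 0`, which gives strict monotonicity and strict convexity. As `ε → ∞`, `1/ε → 0`, so
`a^{1/ε} → 1` and `h' ε → 1`.
-/

open Real Filter Topology Set

section ConstRpowOneDiv

variable {a x : ℝ}

theorem hasDerivAt_const_rpow_one_div (ha : 0 < a) (hx : x ≠ 0) :
    HasDerivAt (fun y => a ^ (1 / y)) (-(a ^ (1 / x) * log a / x ^ 2)) x := by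
  simp only [one_div]
  exact ((hasDerivAt_inv hx).const_rpow ha).congr_deriv (by ring)

theorem hasDerivAt_mul_const_rpow_one_div (ha : 0 < a) (hx : x ≠ 0) :
    HasDerivAt (fun y => y * a ^ (1 / y)) (a ^ (1 / x) * (1 - 1 / x * log a)) x :=
  ((hasDerivAt_id' x).mul (hasDerivAt_const_rpow_one_div ha hx)).congr_deriv
    (by field_simp; ring)

theorem hasDerivAt_const_rpow_one_div_mul (ha : 0 < a) (hx : x ≠ 0) :
    HasDerivAt (fun y => a ^ (1 / y) * (1 - 1 / y * log a))
      (a ^ (1 / x) * (1 / x ^ 3) * log a ^ 2) x := by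
  have hsub : HasDerivAt (fun y => 1 - 1 / y * log a) (log a / x ^ 2) x := by
    simp only [one_div]
    exact (((hasDerivAt_inv hx).mul_const (log a)).const_sub 1).congr_deriv (by ring)
  exact ((hasDerivAt_const_rpow_one_div ha hx).mul hsub).congr_deriv (by field_simp; ring)

theorem tendsto_const_rpow_one_div_atTop (ha : 0 < a) :
    Tendsto (fun y : ℝ => a ^ (1 / y)) atTop (𝓝 1) := by
  simp only [one_div]
  simpa [Function.comp_def] using
    ((continuous_const_rpow ha.ne').tendsto 0).comp tendsto_inv_atTop_zero

end ConstRpowOneDiv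

theorem strictMonoOn_of_hasDerivAt_pos {D : Set ℝ} (hD : Convex ℝ D) (hDo : IsOpen D)
    {f f' : ℝ → ℝ} (hf : ∀ x ∈ D, HasDerivAt f (f' x) x) (hf' : ∀ x ∈ D, 0 < f' x) :
    StrictMonoOn f D := by
  refine strictMonoOn_of_hasDerivWithinAt_pos (f' := f') hD
    (fun x hx => (hf x hx).continuousAt.continuousWithinAt) ?_ ?_ <;> rw [hDo.interior_eq]
  exacts [fun x hx => (hf x hx).hasDerivWithinAt, hf']

theorem strictConvexOn_of_hasDerivAt2_pos {D : Set ℝ} (hD : Convex ℝ D) (hDo : IsOpen D)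
    {f f' f'' : ℝ → ℝ} (hf : ∀ x ∈ D, HasDerivAt f (f' x) x)
    (hf' : ∀ x ∈ D, HasDerivAt f' (f'' x) x) (hf'' : ∀ x ∈ D, 0 < f'' x) :
    StrictConvexOn ℝ D f := by
  refine StrictMonoOn.strictConvexOn_of_deriv hD
    (fun x hx => (hf x hx).continuousAt.continuousWithinAt) ?_
  rw [hDo.interior_eq]
  exact (strictMonoOn_of_hasDerivAt_pos hD hDo hf' hf'').congr fun x hx => (hf x hx).deriv.symm

/-- The function `g(ε) = Y + εK(K/Y)^{1/ε}` with `0 < K < Y` is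
strictly increasing and strictly convex on `(0,∞)`, has the stated first and
second derivatives, the second derivative is positive, and the first derivative
tends to `K` as `ε → ∞`. -/
theorem notch_lhs_properties
    (K Y : ℝ) (hK : 0 < K) (hKY : K < Y) :
    let g : ℝ → ℝ := fun ε => Y + ε * K * (K / Y) ^ (1 / ε)
    let g' : ℝ → ℝ := fun ε => K * (K / Y) ^ (1 / ε) * (1 - (1 / ε) * Real.log (K / Y))
    let g'' : ℝ → ℝ := fun ε => K * (K / Y) ^ (1 / ε) * (1 / ε ^ 3) * (Real.log (K / Y)) ^ 2
    StrictMonoOn g (Set.Ioi 0) ∧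
    StrictConvexOn ℝ (Set.Ioi 0) g ∧
    (∀ ε : ℝ, 0 < ε → HasDerivAt g (g' ε) ε) ∧
    (∀ ε : ℝ, 0 < ε → HasDerivAt g' (g'' ε) ε ∧ 0 < g'' ε) ∧
    Filter.Tendsto g' Filter.atTop (nhds K) := by
  intro g g' g''
  have ha : 0 < K / Y := div_pos hK (hK.trans hKY)
  have hlog : log (K / Y) < 0 := log_neg ha ((div_lt_one (hK.trans hKY)).2 hKY)
  have hg : ∀ ε : ℝ, 0 < ε → HasDerivAt g (g' ε) ε := fun ε hε => by
    simpa [g, g', mul_assoc, mul_left_comm] using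
      ((hasDerivAt_mul_const_rpow_one_div ha hε.ne').const_mul K).const_add Y
  have hg' : ∀ ε : ℝ, 0 < ε → HasDerivAt g' (g'' ε) ε := fun ε hε => by
    simpa [g', g'', mul_assoc] using (hasDerivAt_const_rpow_one_div_mul ha hε.ne').const_mul K
  have hg'_pos : ∀ ε ∈ Ioi (0 : ℝ), 0 < g' ε := fun ε (hε : 0 < ε) => by
    have : 1 / ε * log (K / Y) < 0 := mul_neg_of_pos_of_neg (by positivity) hlog
    exact mul_pos (mul_pos hK (rpow_pos_of_pos ha _)) (by linarith)
  have hg''_pos : ∀ ε ∈ Ioi (0 : ℝ), 0 < g'' ε := fun ε (hε : 0 < ε) =>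
    mul_pos (by positivity) (sq_pos_of_neg hlog)
  refine ⟨strictMonoOn_of_hasDerivAt_pos (convex_Ioi 0) isOpen_Ioi hg hg'_pos,
    strictConvexOn_of_hasDerivAt2_pos (convex_Ioi 0) isOpen_Ioi hg hg' hg''_pos, hg,
    fun ε hε => ⟨hg' ε hε, hg''_pos ε hε⟩, ?_⟩
  have hinv : Tendsto (fun ε : ℝ => 1 - 1 / ε * log (K / Y)) atTop (𝓝 1) := by
    simp only [one_div]
    simpa using (tendsto_inv_atTop_zero.mul_const (log (K / Y))).const_sub 1
  simpa [g'] using ((tendsto_const_rpow_one_div_atTop ha).const_mul K).mul hinv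
end
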